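/- Let T_{N+1} = [[T_N, 0],[B_N, C₀]] where T_N is a contractive lower triangular Toeplitz block matrix and B_N = [C_{N+1}, ..., C₁]. If (D²_{T_k})_M = 0 for some k ≤ N-1 (shorted with respect to the first coordinate copy of M), then (D²_{T_j})_M = 0 for all j with k ≤ j ≤ N. -/

import Mathlib

set_option synthInstance.maxHeartbeats 400000
open ContinuousLinearMap

variable {M N : Type*} [NormedAddCommGroup M] [InnerProductSpace ℂ M] [CompleteSpace M]
  [NormedAddCommGroup N] [InnerProductSpace ℂ N] [CompleteSpace N]


instance piLpCompleteSpace {ι : Type*} [Fintype ι] (E : ι → Type*)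
    [∀ i, NormedAddCommGroup (E i)] [∀ i, CompleteSpace (E i)] :
    CompleteSpace (PiLp 2 E) :=
  inferInstance

/-- `W` is the Kreĭn shorted operator of `S` with respect to the closed subspace `K`. -/
def IsShortedOp {H : Type*} [NormedAddCommGroup H] [InnerProductSpace ℂ H]
    [CompleteSpace H] (S W : H →L[ℂ] H) (K : Submodule ℂ H) : Prop :=
  IsSelfAdjoint W ∧
    ∀ f : H, (inner ℂ (W f) f : ℂ).re = ⨅ φ : Kᗮ, (inner ℂ (S (f + φ)) (f + φ) : ℂ).re

/-- The first coordinate copy of `M` inside `M^{k+1}`. -/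
def firstCoord (M : Type*) [NormedAddCommGroup M] [InnerProductSpace ℂ M] (k : ℕ) :
    Submodule ℂ (PiLp 2 fun _ : Fin (k + 1) => M) where
  carrier := {f | ∀ i : Fin (k + 1), i ≠ 0 → f i = 0}
  add_mem' := by
    intro a b ha hb i hi
    show a i + b i = 0
    rw [ha i hi, hb i hi, add_zero]
  zero_mem' := fun i _ => rfl
  smul_mem' := by
    intro c a ha i hi
    show c • a i = 0
    rw [ha i hi, smul_zero]

/-- The embedding of `M` onto the first coordinate of `M^{k+1}`. -/
def emb (M : Type*) [NormedAddCommGroup M] [InnerProductSpace ℂ M] (k : ℕ) (m : M) :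
    PiLp 2 fun _ : Fin (k + 1) => M :=
  WithLp.toLp 2 fun i : Fin (k + 1) => if i = 0 then m else 0

/-! Zero-padding a vector of `M^{k+1}` to `M^{j+1}` (`k ≤ j`) preserves its norm and its first
coordinate, and can only increase the norm of its image under the lower triangular Toeplitz
operator, because `T_k` is the upper-left corner of `T_j`. So the defect `‖h‖² - ‖T h‖²` can only
decrease, which gives `(D²_{T_j})_M ≤ (D²_{T_k})_M` on `M`. If the latter vanishes, the positive
operator `(D²_{T_j})_M` has nonpositive quadratic form and is therefore zero. -/

open Finset

section ZeroPadding

variable {X : Type*} [SeminormedAddCommGroup X]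

def extendByZero {n : ℕ} (f : Fin n → X) : ℕ → X :=
  fun j => if h : j < n then f ⟨j, h⟩ else 0

lemma extendByZero_of_lt {n j : ℕ} (f : Fin n → X) (h : j < n) : extendByZero f j = f ⟨j, h⟩ :=
  dif_pos h

lemma extendByZero_val {n : ℕ} (f : Fin n → X) (i : Fin n) : extendByZero f i = f i :=
  extendByZero_of_lt f i.isLt

lemma extendByZero_of_le {n j : ℕ} (f : Fin n → X) (h : n ≤ j) : extendByZero f j = 0 :=
  dif_neg (by omega)

def zeroPad {m : ℕ} (n : ℕ) (f : PiLp 2 fun _ : Fin m => X) : PiLp 2 fun _ : Fin n => X :=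
  WithLp.toLp 2 fun i => extendByZero f i

lemma extendByZero_zeroPad {m n : ℕ} (h : m ≤ n) (f : PiLp 2 fun _ : Fin m => X) :
    extendByZero (zeroPad n f) = extendByZero f := by
  funext j
  by_cases hj : j < n
  · exact extendByZero_of_lt (zeroPad n f) hj
  · rw [extendByZero_of_le _ (not_lt.1 hj), extendByZero_of_le _ (by omega)]

lemma PiLp.norm_sq_eq_sum_range {n : ℕ} (f : PiLp 2 fun _ : Fin n => X) :
    ‖f‖ ^ 2 = ∑ j ∈ range n, ‖extendByZero f j‖ ^ 2 := by
  rw [PiLp.norm_sq_eq_of_L2, ← Fin.sum_univ_eq_sum_range]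
  simp only [extendByZero_val]

lemma sum_range_norm_sq_extendByZero_le {m n : ℕ} (h : m ≤ n) (f : PiLp 2 fun _ : Fin n => X) :
    ∑ j ∈ range m, ‖extendByZero f j‖ ^ 2 ≤ ‖f‖ ^ 2 := by
  rw [PiLp.norm_sq_eq_sum_range]
  exact sum_le_sum_of_subset_of_nonneg (range_subset_range.2 h) fun _ _ _ => by positivity

lemma norm_zeroPad {m n : ℕ} (h : m ≤ n) (f : PiLp 2 fun _ : Fin m => X) :
    ‖zeroPad n f‖ = ‖f‖ := by
  refine (sq_eq_sq₀ (norm_nonneg _) (norm_nonneg _)).1 ?_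
  obtain ⟨d, rfl⟩ := Nat.exists_eq_add_of_le h
  rw [PiLp.norm_sq_eq_sum_range, PiLp.norm_sq_eq_sum_range, extendByZero_zeroPad h,
    sum_range_add, add_eq_left]
  exact sum_eq_zero fun j _ => by rw [extendByZero_of_le _ (by omega), norm_zero, sq, mul_zero]

end ZeroPadding

section Toeplitz

variable {X Y : Type*} [NormedAddCommGroup X] [InnerProductSpace ℂ X]
  [NormedAddCommGroup Y] [InnerProductSpace ℂ Y]

def IsLowerToeplitz (C : ℕ → X →L[ℂ] Y)
    (T : (k : ℕ) → (PiLp 2 fun _ : Fin (k + 1) => X) →L[ℂ] (PiLp 2 fun _ : Fin (k + 1) => Y)) :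
    Prop :=
  ∀ (k : ℕ) (f : PiLp 2 fun _ : Fin (k + 1) => X) (i : Fin (k + 1)),
    T k f i = ∑ j : Fin (k + 1), if (j : ℕ) ≤ (i : ℕ) then C ((i : ℕ) - (j : ℕ)) (f j) else 0

variable {C : ℕ → X →L[ℂ] Y}
  {T : (k : ℕ) → (PiLp 2 fun _ : Fin (k + 1) => X) →L[ℂ] (PiLp 2 fun _ : Fin (k + 1) => Y)}

lemma IsLowerToeplitz.apply_eq_sum_range (hT : IsLowerToeplitz C T) {k : ℕ}
    (f : PiLp 2 fun _ : Fin (k + 1) => X) (i : Fin (k + 1)) :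
    T k f i = ∑ j ∈ range (i + 1), C (i - j) (extendByZero f j) := by
  have hfilter : (range (k + 1)).filter (· ≤ (i : ℕ)) = range (i + 1) := by
    ext j; simp only [mem_filter, mem_range]; omega
  rw [hT, ← hfilter, sum_filter,
    ← Fin.sum_univ_eq_sum_range fun j => if j ≤ (i : ℕ) then C (i - j) (extendByZero f j) else 0]
  simp only [extendByZero_val]

lemma IsLowerToeplitz.extendByZero_apply_zeroPad (hT : IsLowerToeplitz C T) {a b : ℕ}
    (hab : a ≤ b) (f : PiLp 2 fun _ : Fin (a + 1) => X) {i : ℕ} (hi : i < a + 1) :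
    extendByZero (T b (zeroPad (b + 1) f)) i = extendByZero (T a f) i := by
  rw [extendByZero_of_lt _ hi, extendByZero_of_lt _ (by omega), hT.apply_eq_sum_range,
    hT.apply_eq_sum_range, extendByZero_zeroPad (by omega)]

lemma IsLowerToeplitz.norm_apply_le_norm_apply_zeroPad (hT : IsLowerToeplitz C T) {a b : ℕ}
    (hab : a ≤ b) (f : PiLp 2 fun _ : Fin (a + 1) => X) :
    ‖T a f‖ ≤ ‖T b (zeroPad (b + 1) f)‖ := by
  refine (sq_le_sq₀ (norm_nonneg _) (norm_nonneg _)).1 ?_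
  calc ‖T a f‖ ^ 2 = ∑ i ∈ range (a + 1), ‖extendByZero (T b (zeroPad (b + 1) f)) i‖ ^ 2 := by
        rw [PiLp.norm_sq_eq_sum_range]
        exact sum_congr rfl fun i hi => by
          rw [hT.extendByZero_apply_zeroPad hab f (mem_range.1 hi)]
    _ ≤ ‖T b (zeroPad (b + 1) f)‖ ^ 2 := sum_range_norm_sq_extendByZero_le (by omega) _

lemma IsLowerToeplitz.norm_apply_le_of_opNorm_le_one (hT : IsLowerToeplitz C T) {a b : ℕ}
    (hab : a ≤ b) (hTb : ‖T b‖ ≤ 1) (f : PiLp 2 fun _ : Fin (a + 1) => X) : ‖T a f‖ ≤ ‖f‖ :=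
  calc ‖T a f‖ ≤ ‖T b (zeroPad (b + 1) f)‖ := hT.norm_apply_le_norm_apply_zeroPad hab f
    _ ≤ ‖zeroPad (b + 1) f‖ := by simpa using (T b).le_of_opNorm_le hTb (zeroPad (b + 1) f)
    _ = ‖f‖ := norm_zeroPad (by omega) f

end Toeplitz

lemma re_inner_one_sub_adjoint_comp_self_apply {H K : Type*} [NormedAddCommGroup H]
    [InnerProductSpace ℂ H] [CompleteSpace H] [NormedAddCommGroup K] [InnerProductSpace ℂ K]
    [CompleteSpace K] (A : H →L[ℂ] K) (h : H) :
    (inner ℂ ((1 - adjoint A ∘L A) h) h).re = ‖h‖ ^ 2 - ‖A h‖ ^ 2 := by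
  rw [sub_apply, one_apply_eq_self, inner_sub_left, Complex.sub_re,
    apply_norm_sq_eq_inner_adjoint_left, ← RCLike.re_to_complex, inner_self_eq_norm_sq]
  rfl

lemma re_inner_one_sub_adjoint_comp_self_nonneg {H K : Type*} [NormedAddCommGroup H]
    [InnerProductSpace ℂ H] [CompleteSpace H] [NormedAddCommGroup K] [InnerProductSpace ℂ K]
    [CompleteSpace K] {A : H →L[ℂ] K} (hA : ∀ x, ‖A x‖ ≤ ‖x‖) (h : H) :
    0 ≤ (inner ℂ ((1 - adjoint A ∘L A) h) h).re := by
  rw [re_inner_one_sub_adjoint_comp_self_apply, sub_nonneg]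
  exact pow_le_pow_left₀ (norm_nonneg _) (hA h) 2

section Shorted

variable {H : Type*} [NormedAddCommGroup H] [InnerProductSpace ℂ H] [CompleteSpace H]
  {S W : H →L[ℂ] H} {K : Submodule ℂ H}

lemma IsShortedOp.le_re_inner (hW : IsShortedOp S W K) {f : H} {c : ℝ}
    (h : ∀ φ ∈ Kᗮ, c ≤ (inner ℂ (S (f + φ)) (f + φ)).re) : c ≤ (inner ℂ (W f) f).re := by
  rw [hW.2 f]
  exact le_ciInf fun φ => h φ φ.2

lemma IsShortedOp.re_inner_le (hW : IsShortedOp S W K) (hS : ∀ x, 0 ≤ (inner ℂ (S x) x).re)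
    (f : H) {φ : H} (hφ : φ ∈ Kᗮ) :
    (inner ℂ (W f) f).re ≤ (inner ℂ (S (f + φ)) (f + φ)).re := by
  rw [hW.2 f]
  exact ciInf_le ⟨0, Set.forall_mem_range.2 fun _ => hS _⟩ (⟨φ, hφ⟩ : Kᗮ)

lemma IsShortedOp.isPositive (hW : IsShortedOp S W K) (hS : ∀ x, 0 ≤ (inner ℂ (S x) x).re) :
    W.IsPositive :=
  isPositive_def'.2 ⟨hW.1, fun _ => hW.le_re_inner fun _ _ => hS _⟩

end Shorted

lemma ContinuousLinearMap.IsPositive.eq_zero_of_re_inner_nonpos {𝕜 E : Type*} [RCLike 𝕜]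
    [NormedAddCommGroup E] [InnerProductSpace 𝕜 E] [CompleteSpace E] {A : E →L[𝕜] E}
    (hA : A.IsPositive) (h : ∀ x, RCLike.re (inner 𝕜 (A x) x) ≤ 0) : A = 0 := by
  refine le_antisymm ?_ ((nonneg_iff_isPositive A).2 hA)
  rw [le_def, zero_sub]
  refine isPositive_def'.2 ⟨hA.isSelfAdjoint.neg, fun x => ?_⟩
  simpa [reApplyInnerSelf] using h x

lemma mem_firstCoord_orthogonal {X : Type*} [NormedAddCommGroup X] [InnerProductSpace ℂ X]
    {n : ℕ} (g : PiLp 2 fun _ : Fin (n + 1) => X) :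
    g ∈ (firstCoord X n)ᗮ ↔ g 0 = 0 := by
  rw [Submodule.mem_orthogonal]
  constructor
  · intro hg
    have h0 := hg (emb X n (g 0)) fun i hi => by simp [emb, hi]
    rw [PiLp.inner_apply, Fintype.sum_eq_single 0 fun i hi => by simp [emb, hi]] at h0
    simpa [emb] using h0
  · intro h0 u hu
    rw [PiLp.inner_apply]
    refine sum_eq_zero fun i _ => ?_
    rcases eq_or_ne i 0 with rfl | hi
    · rw [h0, inner_zero_right]
    · rw [hu i hi, inner_zero_left]

lemma emb_apply_zero {X : Type*} [NormedAddCommGroup X] [InnerProductSpace ℂ X] (n : ℕ) (x : X) :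
    emb X n x 0 = x := by
  simp [emb]

lemma zeroPad_apply_zero {X : Type*} [SeminormedAddCommGroup X] {m n : ℕ}
    (f : PiLp 2 fun _ : Fin (m + 1) => X) : zeroPad (n + 1) f 0 = f 0 :=
  extendByZero_of_lt f (Nat.succ_pos m)

theorem IsLowerToeplitz.re_inner_shorted_le {C : ℕ → M →L[ℂ] N}
    {T : (k : ℕ) → (PiLp 2 fun _ : Fin (k + 1) => M) →L[ℂ] (PiLp 2 fun _ : Fin (k + 1) => N)}
    (hT : IsLowerToeplitz C T) {k j : ℕ} (hkj : k ≤ j) (hTj : ∀ x, ‖T j x‖ ≤ ‖x‖)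
    {Wk : (PiLp 2 fun _ : Fin (k + 1) => M) →L[ℂ] (PiLp 2 fun _ : Fin (k + 1) => M)}
    {Wj : (PiLp 2 fun _ : Fin (j + 1) => M) →L[ℂ] (PiLp 2 fun _ : Fin (j + 1) => M)}
    (hWk : IsShortedOp (1 - adjoint (T k) ∘L T k) Wk (firstCoord M k))
    (hWj : IsShortedOp (1 - adjoint (T j) ∘L T j) Wj (firstCoord M j))
    (f : PiLp 2 fun _ : Fin (j + 1) => M) :
    (inner ℂ (Wj f) f).re ≤ (inner ℂ (Wk (emb M k (f 0))) (emb M k (f 0))).re := by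
  refine hWk.le_re_inner fun ψ hψ => ?_
  set h := emb M k (f 0) + ψ
  have hpad : zeroPad (j + 1) h - f ∈ (firstCoord M j)ᗮ := by
    rw [mem_firstCoord_orthogonal, PiLp.sub_apply, zeroPad_apply_zero, PiLp.add_apply,
      emb_apply_zero, (mem_firstCoord_orthogonal ψ).1 hψ, add_zero, sub_self]
  calc (inner ℂ (Wj f) f).re
      ≤ (inner ℂ ((1 - adjoint (T j) ∘L T j) (f + (zeroPad (j + 1) h - f)))
          (f + (zeroPad (j + 1) h - f))).re :=
        hWj.re_inner_le (re_inner_one_sub_adjoint_comp_self_nonneg hTj) f hpad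
    _ = ‖h‖ ^ 2 - ‖T j (zeroPad (j + 1) h)‖ ^ 2 := by
        rw [add_sub_cancel, re_inner_one_sub_adjoint_comp_self_apply, norm_zeroPad (by omega)]
    _ ≤ ‖h‖ ^ 2 - ‖T k h‖ ^ 2 := by
        gcongr
        exact hT.norm_apply_le_norm_apply_zeroPad hkj h
    _ = (inner ℂ ((1 - adjoint (T k) ∘L T k) h) h).re :=
        (re_inner_one_sub_adjoint_comp_self_apply _ _).symm

theorem shorted_toeplitz_zero_propagates_general (C : ℕ → (M →L[ℂ] N)) (Nn : ℕ)
    (T : (k : ℕ) → (PiLp 2 fun _ : Fin (k + 1) => M) →L[ℂ]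
      (PiLp 2 fun _ : Fin (k + 1) => N))
    (hToe : ∀ (k : ℕ) (f : PiLp 2 fun _ : Fin (k + 1) => M) (i : Fin (k + 1)),
      T k f i = ∑ j : Fin (k + 1), if (j : ℕ) ≤ (i : ℕ) then C ((i : ℕ) - (j : ℕ)) (f j) else 0)
    (hTc : ‖T Nn‖ ≤ 1)
    (W : (k : ℕ) → (PiLp 2 fun _ : Fin (k + 1) => M) →L[ℂ]
      (PiLp 2 fun _ : Fin (k + 1) => M))
    (hW : ∀ k, IsShortedOp (1 - (ContinuousLinearMap.adjoint (T k)) ∘L T k)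
      (W k) (firstCoord M k))
    (k : ℕ) (hWk : W k = 0) :
    ∀ j : ℕ, k ≤ j → j ≤ Nn → W j = 0 := by
  intro j hkj hjN
  have hTj : ∀ x, ‖T j x‖ ≤ ‖x‖ :=
    IsLowerToeplitz.norm_apply_le_of_opNorm_le_one hToe hjN hTc
  have hWj_pos := (hW j).isPositive (re_inner_one_sub_adjoint_comp_self_nonneg hTj)
  refine hWj_pos.eq_zero_of_re_inner_nonpos fun f => ?_
  simpa [hWk] using IsLowerToeplitz.re_inner_shorted_le hToe hkj hTj (hW k) (hW j) f

/-- For a Schur sequence `C₀, …, C_N` (i.e. the lower triangular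
block Toeplitz matrix `T_N` is a contraction), if the shorted operator
`(D²_{T_k})_M = 0` for some `k ≤ N - 1` (shorted with respect to the first coordinate
copy of `M`), then `(D²_{T_j})_M = 0` for all `j` with `k ≤ j ≤ N`. -/
theorem shorted_toeplitz_zero_propagates (C : ℕ → (M →L[ℂ] N)) (Nn : ℕ)
    (T : (k : ℕ) → (PiLp 2 fun _ : Fin (k + 1) => M) →L[ℂ]
      (PiLp 2 fun _ : Fin (k + 1) => N))
    (hToe : ∀ (k : ℕ) (f : PiLp 2 fun _ : Fin (k + 1) => M) (i : Fin (k + 1)),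
      T k f i = ∑ j : Fin (k + 1), if (j : ℕ) ≤ (i : ℕ) then C ((i : ℕ) - (j : ℕ)) (f j) else 0)
    (hTc : ‖T Nn‖ ≤ 1)
    (W : (k : ℕ) → (PiLp 2 fun _ : Fin (k + 1) => M) →L[ℂ]
      (PiLp 2 fun _ : Fin (k + 1) => M))
    (hWpos : ∀ k, (W k).IsPositive)
    (hW : ∀ k, IsShortedOp (1 - (ContinuousLinearMap.adjoint (T k)) ∘L T k)
      (W k) (firstCoord M k))
    (k : ℕ) (hk : k ≤ Nn - 1) (hWk : W k = 0) :
    ∀ j : ℕ, k ≤ j → j ≤ Nn → W j = 0 :=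
  shorted_toeplitz_zero_propagates_general C Nn T hToe hTc W hW k hWk
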